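/- arXiv:2508.18650 — 3 statements merged into one kernel-verified Lean document; each statement's English description precedes it below -/
import Mathlib

section
/- Let l ∈ ℝ, k ∈ ℕ, t ≥ 0, and suppose c : [0,∞) → ℝ satisfies c(s) = e^{ls} + O(s^{k+1}) as s → 0⁺. Then |c(t/n)^n − e^{tl}| = O(1/n^k) as n → ∞. -/
/-!
Write `aₙ = c (t/n)` and `bₙ = e^{lt/n}`, so that `bₙⁿ = e^{tl}`. Telescoping gives
`|aₙⁿ - bₙⁿ| ≤ n · max(|aₙ|, |bₙ|)ⁿ⁻¹ · |aₙ - bₙ|`. Both `|aₙ|` and `|bₙ|` are at most `e^{C/n}`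
for a constant `C`, so the power `max(|aₙ|, |bₙ|)ⁿ⁻¹` stays below `e^C`, and the factor `n` costs
one of the `k + 1` powers of `1/n` in `|aₙ - bₙ| = O(n^{-(k+1)})`.
-/

open Filter Topology Asymptotics

theorem Real.exp_add_le_exp_add {x y : ℝ} (hx : 0 ≤ x) (hy : 0 ≤ y) :
    Real.exp x + y ≤ Real.exp (x + y) := by
  rw [Real.exp_add]
  nlinarith [Real.add_one_le_exp y, Real.one_le_exp hx]

theorem pow_sub_pow_isBigO_of_sub_isBigO {a b : ℕ → ℝ} {B : ℝ} {k : ℕ} (hB : 0 ≤ B)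
    (hb : ∀ n : ℕ, |b n| ≤ Real.exp (B / n))
    (hab : (fun n => a n - b n) =O[atTop] fun n : ℕ => 1 / (n : ℝ) ^ (k + 1)) :
    (fun n => a n ^ n - b n ^ n) =O[atTop] fun n : ℕ => 1 / (n : ℝ) ^ k := by
  obtain ⟨D, hD, hbound⟩ := hab.exists_nonneg
  refine IsBigO.of_bound (D * Real.exp (B + D)) ?_
  filter_upwards [hbound.bound, eventually_ge_atTop 1] with n hn hn1
  have hn1 : (1 : ℝ) ≤ n := by exact_mod_cast hn1
  have hn0 : (0 : ℝ) < n := one_pos.trans_le hn1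
  rw [Real.norm_eq_abs, Real.norm_of_nonneg (by positivity), ← div_eq_mul_one_div] at hn
  have hab_n : |a n - b n| ≤ D / n :=
    hn.trans (div_le_div_of_nonneg_left hD hn0 (le_self_pow₀ hn1 k.succ_ne_zero))
  have ha : |a n| ≤ Real.exp ((B + D) / n) :=
    calc |a n| ≤ |b n| + |a n - b n| := by linarith [abs_sub_abs_le_abs_sub (a n) (b n)]
      _ ≤ Real.exp (B / n) + D / n := add_le_add (hb n) hab_n
      _ ≤ Real.exp ((B + D) / n) := by
        rw [add_div]; exact Real.exp_add_le_exp_add (by positivity) (by positivity)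
  have hb' : |b n| ≤ Real.exp ((B + D) / n) :=
    (hb n).trans (Real.exp_le_exp.2 (div_le_div_of_nonneg_right (by linarith) hn0.le))
  have hmax : max |a n| |b n| ^ (n - 1) ≤ Real.exp (B + D) :=
    calc max |a n| |b n| ^ (n - 1) ≤ Real.exp ((B + D) / n) ^ (n - 1) :=
          pow_le_pow_left₀ (le_max_of_le_left (abs_nonneg _)) (max_le ha hb') _
      _ ≤ Real.exp ((B + D) / n) ^ n :=
          pow_le_pow_right₀ (Real.one_le_exp (by positivity)) (n.sub_le 1)
      _ = Real.exp (B + D) := by rw [← Real.exp_nat_mul, mul_div_cancel₀ _ hn0.ne']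
  calc ‖a n ^ n - b n ^ n‖ ≤ |a n - b n| * n * max |a n| |b n| ^ (n - 1) :=
        abs_pow_sub_pow_le _ _ _
    _ ≤ D / n ^ (k + 1) * n * Real.exp (B + D) := by gcongr
    _ = D * Real.exp (B + D) * ‖1 / (n : ℝ) ^ k‖ := by
        rw [Real.norm_of_nonneg (by positivity)]
        field_simp
        ring

theorem tendsto_const_div_natCast_nhdsWithin_Ici {t : ℝ} (ht : 0 ≤ t) :
    Tendsto (fun n : ℕ => t / n) atTop (𝓝[Set.Ici 0] 0) :=
  tendsto_nhdsWithin_of_tendsto_nhds_of_eventually_within _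
    (tendsto_const_nhds.div_atTop tendsto_natCast_atTop_atTop)
    (Eventually.of_forall fun n => div_nonneg ht n.cast_nonneg)

/-- Scalar Galkin–Remizov fast convergence: if `c s = e^{l s} + O(s^{k+1})` as
`s → 0⁺`, then `|c (t/n) ^ n - e^{t l}| = O(1/n^k)` as `n → ∞`. -/
theorem scalar_galkin_remizov (c : ℝ → ℝ) (l : ℝ) (k : ℕ) (t : ℝ) (ht : 0 ≤ t)
    (hc : (fun s : ℝ => c s - Real.exp (l * s)) =O[𝓝[Set.Ici 0] 0]
      fun s : ℝ => s ^ (k + 1)) :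
    (fun n : ℕ => c (t / n) ^ n - Real.exp (t * l)) =O[atTop]
      fun n : ℕ => 1 / (n : ℝ) ^ k := by
  have hstep : (fun n : ℕ => c (t / n) - Real.exp (l * (t / n))) =O[atTop]
      fun n : ℕ => 1 / (n : ℝ) ^ (k + 1) := by
    refine (hc.comp_tendsto (tendsto_const_div_natCast_nhdsWithin_Ici ht)).trans ?_
    simp only [Function.comp_def, div_pow t, div_eq_mul_one_div (t ^ (k + 1))]
    exact (isBigO_refl _ _).const_mul_left _
  have hexp (n : ℕ) : |Real.exp (l * (t / n))| ≤ Real.exp (|l| * t / n) := by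
    rw [abs_of_pos (Real.exp_pos _), mul_div_assoc]
    exact Real.exp_le_exp.2 (mul_le_mul_of_nonneg_right (le_abs_self l) (by positivity))
  refine (pow_sub_pow_isBigO_of_sub_isBigO (by positivity) hexp hstep).congr' ?_ .rfl
  filter_upwards [eventually_ne_atTop 0] with n hn
  rw [← Real.exp_nat_mul]
  field_simp
end

section
/- For every sequence (a_n) of positive reals with a_n → 0, there exists a continuous function c : [0,∞) → ℝ with c(0) = 1, c'(0) = 0, such that for some t > 0 the convergence |c(t/n)^n − 1| → 0 holds but |c(t/n)^n − 1| ≥ a_n for infinitely many n. That is, the convergence in the scalar Chernoff theorem can be arbitrarily slow. -/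
open Filter Topology

/-! Take `c x = exp (x g(x))` with `g ≥ 0` continuous and `g 0 = 0`. Then `c' 0 = g 0 = 0` and
`c (1/n) ^ n = exp (g (1/n)) → 1`, while `|c (1/n) ^ n - 1| ≥ g (1/n)`, so it suffices that
`g (1/n) ≥ aₙ` infinitely often. Choose indices `m k > k` with `a (m k) ≤ 2⁻ᵏ` and let
`g x = ∑ₖ 2⁻ᵏ φ (m k * x)` for a tent `φ` with `φ 0 = 0`, `φ 1 = 1`: the series converges
uniformly, and its `k`-th term alone gives `g (1 / m k) ≥ 2⁻ᵏ ≥ a (m k)`. -/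

theorem hasDerivAt_mul_self_of_continuousAt {𝕜 : Type*} [NontriviallyNormedField 𝕜]
    {g : 𝕜 → 𝕜} (hg : ContinuousAt g 0) : HasDerivAt (fun x => x * g x) (g 0) 0 := by
  rw [hasDerivAt_iff_tendsto_slope]
  refine (hg.tendsto.mono_left nhdsWithin_le_nhds).congr' ?_
  filter_upwards [self_mem_nhdsWithin] with y (hy : y ≠ 0)
  rw [slope_def_field]
  field_simp
  ring

theorem exp_one_div_mul_pow {g : ℝ → ℝ} {n : ℕ} (hn : n ≠ 0) :
    Real.exp (1 / n * g (1 / n)) ^ n = Real.exp (g (1 / n)) := by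
  rw [← Real.exp_nat_mul, ← mul_assoc, mul_one_div_cancel (Nat.cast_ne_zero.mpr hn), one_mul]

noncomputable section

def unitTent (y : ℝ) : ℝ := max (1 - |y - 1|) 0

theorem unitTent_mem_Icc (y : ℝ) : unitTent y ∈ Set.Icc 0 1 :=
  ⟨le_max_right _ _, max_le (by linarith [abs_nonneg (y - 1)]) zero_le_one⟩

theorem continuous_unitTent : Continuous unitTent := by
  unfold unitTent
  fun_prop

theorem unitTent_zero : unitTent 0 = 0 := by norm_num [unitTent]

theorem unitTent_one : unitTent 1 = 1 := by norm_num [unitTent]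

def geomDilationSum (φ : ℝ → ℝ) (s : ℕ → ℝ) (x : ℝ) : ℝ :=
  ∑' k, (1 / 2 : ℝ) ^ k * φ (s k * x)

section GeomDilationSum

variable {φ : ℝ → ℝ} (s : ℕ → ℝ)

theorem norm_geomDilationSum_term_le (hφ : ∀ y, φ y ∈ Set.Icc 0 1) (k : ℕ) (x : ℝ) :
    ‖(1 / 2 : ℝ) ^ k * φ (s k * x)‖ ≤ (1 / 2 : ℝ) ^ k := by
  obtain ⟨h0, h1⟩ := hφ (s k * x)
  rw [Real.norm_eq_abs, abs_of_nonneg (by positivity)]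
  exact mul_le_of_le_one_right (by positivity) h1

theorem summable_geomDilationSum_term (hφ : ∀ y, φ y ∈ Set.Icc 0 1) (x : ℝ) :
    Summable fun k => (1 / 2 : ℝ) ^ k * φ (s k * x) :=
  Summable.of_norm_bounded (summable_geometric_of_lt_one (by norm_num) (by norm_num))
    (norm_geomDilationSum_term_le s hφ · x)

theorem continuous_geomDilationSum (hφc : Continuous φ) (hφ : ∀ y, φ y ∈ Set.Icc 0 1) :
    Continuous (geomDilationSum φ s) :=
  continuous_tsum (fun k => by fun_prop)
    (summable_geometric_of_lt_one (by norm_num) (by norm_num)) (norm_geomDilationSum_term_le s hφ)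

theorem geomDilationSum_zero (hφ0 : φ 0 = 0) : geomDilationSum φ s 0 = 0 := by
  simp [geomDilationSum, hφ0]

theorem geomDilationSum_nonneg (hφ : ∀ y, φ y ∈ Set.Icc 0 1) (x : ℝ) :
    0 ≤ geomDilationSum φ s x :=
  tsum_nonneg fun k => mul_nonneg (by positivity) (hφ _).1

theorem term_le_geomDilationSum (hφ : ∀ y, φ y ∈ Set.Icc 0 1) (k : ℕ) (x : ℝ) :
    (1 / 2 : ℝ) ^ k * φ (s k * x) ≤ geomDilationSum φ s x :=
  (summable_geomDilationSum_term s hφ x).le_tsum k fun _ _ => mul_nonneg (by positivity) (hφ _).1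

end GeomDilationSum

theorem exists_continuous_frequently_le_one_div {a : ℕ → ℝ} (ha : Tendsto a atTop (𝓝 0)) :
    ∃ g : ℝ → ℝ, Continuous g ∧ g 0 = 0 ∧ (∀ x, 0 ≤ g x) ∧ ∃ᶠ n : ℕ in atTop, a n ≤ g (1 / n) := by
  have hm : ∀ k : ℕ, ∃ n, k < n ∧ a n ≤ (1 / 2 : ℝ) ^ k := fun k =>
    ((eventually_gt_atTop k).and (ha.eventually (eventually_le_nhds (by positivity)))).exists
  choose m hkm ham using hm
  refine ⟨geomDilationSum unitTent (fun k => m k),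
    continuous_geomDilationSum _ continuous_unitTent unitTent_mem_Icc,
    geomDilationSum_zero _ unitTent_zero, geomDilationSum_nonneg _ unitTent_mem_Icc, ?_⟩
  refine (tendsto_atTop_mono (fun k => (hkm k).le) tendsto_id).frequently
    (Frequently.of_forall fun k => ?_)
  have hmk : (m k : ℝ) ≠ 0 := Nat.cast_ne_zero.mpr (Nat.zero_lt_of_lt (hkm k)).ne'
  calc a (m k) ≤ (1 / 2 : ℝ) ^ k * unitTent (m k * (1 / m k)) := by
        rw [mul_one_div_cancel hmk, unitTent_one, mul_one]; exact ham k
    _ ≤ geomDilationSum unitTent (fun k => m k) (1 / m k) :=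
        term_le_geomDilationSum (fun k => (m k : ℝ)) unitTent_mem_Icc k _

end

theorem scalar_chernoff_arbitrarily_slow_general (a : ℕ → ℝ)
    (hlim : Tendsto a atTop (𝓝 0)) :
    ∃ c : ℝ → ℝ, ContinuousOn c (Set.Ici 0) ∧ c 0 = 1 ∧
      HasDerivWithinAt c 0 (Set.Ici 0) 0 ∧
      ∃ t : ℝ, 0 < t ∧
        Tendsto (fun n : ℕ => c (t / n) ^ n) atTop (𝓝 1) ∧
        ∃ᶠ n in atTop, a n ≤ |c (t / n) ^ n - 1| := by
  obtain ⟨g, hgc, hg0, hg_nonneg, hfreq⟩ := exists_continuous_frequently_le_one_div hlim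
  have hpow : ∀ᶠ n : ℕ in atTop, Real.exp (1 / n * g (1 / n)) ^ n = Real.exp (g (1 / n)) :=
    (eventually_ne_atTop 0).mono fun n hn => exp_one_div_mul_pow hn
  refine ⟨fun x => Real.exp (x * g x), by fun_prop, by simp [hg0], ?_, 1, one_pos, ?_, ?_⟩
  · simpa [hg0] using (hasDerivAt_mul_self_of_continuousAt hgc.continuousAt).exp.hasDerivWithinAt
  · have hg_lim : Tendsto (fun n : ℕ => g (1 / n)) atTop (𝓝 0) :=
      hg0 ▸ (hgc.tendsto 0).comp tendsto_one_div_atTop_nhds_zero_nat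
    simpa using ((Real.continuous_exp.tendsto 0).comp hg_lim).congr' (hpow.mono fun _ h => h.symm)
  · refine (hfreq.and_eventually hpow).mono fun n ⟨hle, heq⟩ => ?_
    simp only [heq]
    have := Real.add_one_le_exp (g (1 / n))
    rw [abs_of_nonneg (by linarith [hg_nonneg (1 / n)])]
    linarith

/-- The convergence in the scalar Chernoff theorem can be arbitrarily slow: for every
sequence of positive reals `aₙ → 0` there exist a continuous `c : [0,∞) → ℝ` with
`c 0 = 1`, `c' 0 = 0`, and some `t > 0` such that `c (t/n) ^ n → 1` but
`|c (t/n) ^ n - 1| ≥ aₙ` for infinitely many `n`. -/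
theorem scalar_chernoff_arbitrarily_slow (a : ℕ → ℝ) (hpos : ∀ n, 0 < a n)
    (hlim : Tendsto a atTop (𝓝 0)) :
    ∃ c : ℝ → ℝ, ContinuousOn c (Set.Ici 0) ∧ c 0 = 1 ∧
      HasDerivWithinAt c 0 (Set.Ici 0) 0 ∧
      ∃ t : ℝ, 0 < t ∧
        Tendsto (fun n : ℕ => c (t / n) ^ n) atTop (𝓝 1) ∧
        ∃ᶠ n in atTop, a n ≤ |c (t / n) ^ n - 1| :=
  scalar_chernoff_arbitrarily_slow_general a hlim
end

section
/- Let F be a Banach space, and let C : [0,∞) → L(F) and V a C₀-semigroup be such that ‖C(t)‖ ≤ e^{wt}, ‖V(t)‖ ≤ e^{wt} for all t ≥ 0 and some w ≥ 0. Suppose f ∈ F and t > 0 are such that ‖C(t/n)f − V(t/n)f‖ ≤ K·(t/n)² for all n ≥ 1 and some constant K, and moreover this bound holds uniformly along the orbit: ‖(C(t/n) − V(t/n))V(kt/n)f‖ ≤ K·(t/n)² for all 0 ≤ k ≤ n−1. Then ‖C(t/n)^n f − V(t)f‖ ≤ e^{w t}·K·t²/n for all n ≥ 1. -/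
/-!
Write `τ = t / n`. Since `V τ ^ n = V t` by the semigroup law, the error is `A ^ n - B ^ n` with
`A = C τ`, `B = V τ`, and the noncommutative telescoping identity
`A ^ n - B ^ n = ∑ k < n, A ^ (n - 1 - k) (A - B) B ^ k` expresses it through the one-step errors
along the orbit `B ^ k f = V (k τ) f`. Each of the `n` terms is at most `e^{w t} K τ²`, and
`n · K (t / n)² = K t² / n`.
-/

open Finset

theorem pow_sub_pow_eq_sum_pow_mul_sub_mul_pow {R : Type*} [Ring R] (a b : R) (n : ℕ) :
    a ^ n - b ^ n = ∑ k ∈ range n, a ^ (n - 1 - k) * (a - b) * b ^ k := by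
  have htel := sum_range_sub' (fun k => a ^ (n - k) * b ^ k) n
  simp only [Nat.sub_zero, pow_zero, mul_one, Nat.sub_self, one_mul] at htel
  rw [← htel]
  refine sum_congr rfl fun k hk => ?_
  obtain ⟨j, rfl⟩ : ∃ j, n = j + k + 1 := ⟨n - k - 1, by grind⟩
  rw [show j + k + 1 - k = j + 1 by omega, show j + k + 1 - (k + 1) = j by omega,
    show j + k + 1 - 1 - k = j by omega, pow_succ a, pow_succ' b]
  noncomm_ring

namespace ContinuousLinearMap

variable {𝕜 E : Type*} [NontriviallyNormedField 𝕜] [NormedAddCommGroup E] [NormedSpace 𝕜 E]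

theorem norm_pow_apply_le (A : E →L[𝕜] E) (x : E) (j : ℕ) :
    ‖(A ^ j) x‖ ≤ ‖A‖ ^ j * ‖x‖ := by
  induction j with
  | zero => simp
  | succ j ih =>
    calc ‖(A ^ (j + 1)) x‖ = ‖A ((A ^ j) x)‖ := by rw [pow_succ']; rfl
      _ ≤ ‖A‖ * (‖A‖ ^ j * ‖x‖) := A.le_opNorm_of_le ih
      _ = ‖A‖ ^ (j + 1) * ‖x‖ := by ring

theorem norm_pow_apply_sub_pow_apply_le (A B : E →L[𝕜] E) (x : E) (n : ℕ) {M ε : ℝ}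
    (hA : ∀ j < n, ‖A‖ ^ j ≤ M) (hAB : ∀ k < n, ‖(A - B) ((B ^ k) x)‖ ≤ ε) :
    ‖(A ^ n) x - (B ^ n) x‖ ≤ n * (M * ε) := by
  rw [← sub_apply, pow_sub_pow_eq_sum_pow_mul_sub_mul_pow, _root_.sum_apply]
  calc ‖∑ k ∈ range n, (A ^ (n - 1 - k) * (A - B) * B ^ k) x‖
      ≤ ∑ k ∈ range n, ‖(A ^ (n - 1 - k)) ((A - B) ((B ^ k) x))‖ := norm_sum_le _ _
    _ ≤ ∑ _k ∈ range n, M * ε := sum_le_sum fun k hk => by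
        have hMk := hA (n - 1 - k) (by grind)
        exact (A.norm_pow_apply_le _ _).trans <| mul_le_mul hMk (hAB k (mem_range.1 hk))
          (norm_nonneg _) ((pow_nonneg (norm_nonneg A) _).trans hMk)
    _ = n * (M * ε) := by rw [sum_const, card_range, nsmul_eq_mul]

end ContinuousLinearMap

theorem pow_eq_apply_natCast_mul_of_add {M : Type*} [Monoid M] {V : ℝ → M} (hV0 : V 0 = 1)
    (hVadd : ∀ s u : ℝ, 0 ≤ s → 0 ≤ u → V (s + u) = V s * V u) {τ : ℝ} (hτ : 0 ≤ τ)
    (k : ℕ) : V τ ^ k = V (k * τ) := by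
  induction k with
  | zero => simp [hV0]
  | succ k ih => rw [pow_succ, ih, ← hVadd _ _ (by positivity) hτ, Nat.cast_succ, add_one_mul]

theorem quantitative_chernoff_general {F : Type*} [NormedAddCommGroup F] [NormedSpace ℝ F]
    (C V : ℝ → F →L[ℝ] F) (w : ℝ) (hw : 0 ≤ w)
    (hV0 : V 0 = 1)
    (hVadd : ∀ s u : ℝ, 0 ≤ s → 0 ≤ u → V (s + u) = V s * V u)
    (hCbound : ∀ s : ℝ, 0 ≤ s → ‖C s‖ ≤ Real.exp (w * s))
    (f : F) (t : ℝ) (ht : 0 < t) (K : ℝ)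
    (horbit : ∀ n : ℕ, 1 ≤ n → ∀ k : ℕ, k < n →
      ‖(C (t / n) - V (t / n)) (V (k * t / n) f)‖ ≤ K * (t / n) ^ 2) :
    ∀ n : ℕ, 1 ≤ n →
      ‖((C (t / n)) ^ n) f - V t f‖ ≤ Real.exp (w * t) * K * t ^ 2 / n := by
  intro n hn
  have hn0 : (0 : ℝ) < n := by exact_mod_cast hn
  have hτ : 0 ≤ t / n := by positivity
  have hVpow := pow_eq_apply_natCast_mul_of_add hV0 hVadd hτ
  have hCpow : ∀ j < n, ‖C (t / n)‖ ^ j ≤ Real.exp (w * t) := fun j hj => calc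
    ‖C (t / n)‖ ^ j ≤ Real.exp (w * (t / n)) ^ j :=
        pow_le_pow_left₀ (norm_nonneg _) (hCbound _ hτ) j
    _ = Real.exp (j * (w * (t / n))) := (Real.exp_nat_mul _ _).symm
    _ ≤ Real.exp (w * t) := Real.exp_le_exp.2 <| by
        rw [show w * t = n * (w * (t / n)) by field_simp]
        gcongr
  have hVt : V (t / n) ^ n = V t := by rw [hVpow, mul_div_cancel₀ _ hn0.ne']
  calc ‖(C (t / n) ^ n) f - V t f‖ = ‖(C (t / n) ^ n) f - (V (t / n) ^ n) f‖ := by rw [hVt]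
    _ ≤ n * (Real.exp (w * t) * (K * (t / n) ^ 2)) :=
        (C (t / n)).norm_pow_apply_sub_pow_apply_le _ f n hCpow fun k hk => by
          rw [hVpow, ← mul_div_assoc]; exact horbit n hn k hk
    _ = Real.exp (w * t) * K * t ^ 2 / n := by field_simp

/-- Quantitative Chernoff estimate: if `‖C s‖ ≤ e^{w s}` and `‖V s‖ ≤ e^{w s}` for
`s ≥ 0`, `V` is a C₀-semigroup, and `C (t/n)` and `V (t/n)` differ by `K (t/n)²`
uniformly along the orbit of `f`, then
`‖C (t/n)^n f - V t f‖ ≤ e^{w t} K t² / n` for all `n ≥ 1`. -/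
theorem quantitative_chernoff {F : Type*} [NormedAddCommGroup F] [NormedSpace ℝ F]
    [CompleteSpace F] (C V : ℝ → F →L[ℝ] F) (w : ℝ) (hw : 0 ≤ w)
    (hV0 : V 0 = 1)
    (hVadd : ∀ s u : ℝ, 0 ≤ s → 0 ≤ u → V (s + u) = V s * V u)
    (hVcont : ∀ g : F, ContinuousOn (fun s => V s g) (Set.Ici 0))
    (hCbound : ∀ s : ℝ, 0 ≤ s → ‖C s‖ ≤ Real.exp (w * s))
    (hVbound : ∀ s : ℝ, 0 ≤ s → ‖V s‖ ≤ Real.exp (w * s))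
    (f : F) (t : ℝ) (ht : 0 < t) (K : ℝ)
    (hdiff : ∀ n : ℕ, 1 ≤ n → ‖C (t / n) f - V (t / n) f‖ ≤ K * (t / n) ^ 2)
    (horbit : ∀ n : ℕ, 1 ≤ n → ∀ k : ℕ, k < n →
      ‖(C (t / n) - V (t / n)) (V (k * t / n) f)‖ ≤ K * (t / n) ^ 2) :
    ∀ n : ℕ, 1 ≤ n →
      ‖((C (t / n)) ^ n) f - V t f‖ ≤ Real.exp (w * t) * K * t ^ 2 / n :=
  quantitative_chernoff_general C V w hw hV0 hVadd hCbound f t ht K horbit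
end
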